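/- arXiv:1911.13214 — 3 statements merged into one kernel-verified Lean document; each statement's English description precedes it below -/
import Mathlib

section
/- For all 1 ≤ s ≤ t ≤ L+1 and every memory bound m ≥ 0 such that C_opt(s,t,m) < ∞, there exists a valid memory-persistent schedule for the subchain from s to t whose peak memory is at most m and whose computation time equals C_opt(s,t,m). -/
/-!
Formal model of the checkpointing problem for back-propagation through a chain
of stages `1, …, L+1` (Beaumont et al., "Optimal checkpointing for heterogeneous
chains").

Data items are activations `a ℓ`, saved internal states `abar ℓ` and gradients
`delta ℓ`.  Operations are `Fall ℓ` (forward storing all intermediate data),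
`Fck ℓ` (forward keeping its input), `Fnone ℓ` (forward replacing its input by
its output) and `B ℓ` (backward step).  A schedule for the subchain from `s` to
`t` starts from memory `{a (s-1), delta t}` and must end having produced
`delta (s-1)`.
-/

namespace Checkpoint

inductive Data : Type
  | a (ℓ : ℕ)
  | abar (ℓ : ℕ)
  | delta (ℓ : ℕ)
  deriving DecidableEq

inductive Op : Type
  | Fall (ℓ : ℕ)
  | Fck (ℓ : ℕ)
  | Fnone (ℓ : ℕ)
  | B (ℓ : ℕ)
  deriving DecidableEq

/-- A chain of `L+1` stages: sizes of activations `wa`, of saved internal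
states `wbar`, of gradients `wdelta`; durations `uf`, `ub` and memory
overheads `of`, `ob` of forward and backward operations. -/
structure Chain where
  L : ℕ
  wa : ℕ → ℕ
  wbar : ℕ → ℕ
  wdelta : ℕ → ℕ
  uf : ℕ → ℕ
  ub : ℕ → ℕ
  of : ℕ → ℕ
  ob : ℕ → ℕ

def Op.stage : Op → ℕ
  | .Fall ℓ => ℓ
  | .Fck ℓ => ℓ
  | .Fnone ℓ => ℓ
  | .B ℓ => ℓ

def Op.duration (c : Chain) : Op → ℕ
  | .Fall ℓ => c.uf ℓ
  | .Fck ℓ => c.uf ℓ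
  | .Fnone ℓ => c.uf ℓ
  | .B ℓ => c.ub ℓ

def Data.size (c : Chain) : Data → ℕ
  | .a ℓ => c.wa ℓ
  | .abar ℓ => c.wbar ℓ
  | .delta ℓ => c.wdelta ℓ

/-- Executing one operation on memory `M`: `some M'` if all its inputs are
present in `M`, `none` otherwise.  `Fall ℓ` and `Fck ℓ` accept `a (ℓ-1)` or
`abar (ℓ-1)` as input and keep it; `Fnone ℓ` consumes `a (ℓ-1)`; `B ℓ`
consumes `delta ℓ` and `abar ℓ`, uses `abar (ℓ-1)` as third input if it is
present (keeping it), and otherwise consumes `a (ℓ-1)`. -/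
def Op.exec : Op → Finset Data → Option (Finset Data)
  | .Fall ℓ, M =>
      if Data.a (ℓ - 1) ∈ M ∨ Data.abar (ℓ - 1) ∈ M then
        some (insert (Data.abar ℓ) M) else none
  | .Fck ℓ, M =>
      if Data.a (ℓ - 1) ∈ M ∨ Data.abar (ℓ - 1) ∈ M then
        some (insert (Data.a ℓ) M) else none
  | .Fnone ℓ, M =>
      if Data.a (ℓ - 1) ∈ M then
        some (insert (Data.a ℓ) (M.erase (Data.a (ℓ - 1)))) else none
  | .B ℓ, M =>
      if Data.delta ℓ ∈ M ∧ Data.abar ℓ ∈ M ∧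
          (Data.a (ℓ - 1) ∈ M ∨ Data.abar (ℓ - 1) ∈ M) then
        some (insert (Data.delta (ℓ - 1))
          (if Data.abar (ℓ - 1) ∈ M then
            (M.erase (Data.delta ℓ)).erase (Data.abar ℓ)
          else
            ((M.erase (Data.delta ℓ)).erase (Data.abar ℓ)).erase (Data.a (ℓ - 1))))
      else none

/-- Executing a list of operations, returning the final memory contents. -/
def execList : Finset Data → List Op → Option (Finset Data)
  | M, [] => some M
  | M, op :: ops => (op.exec M).bind fun M' => execList M' ops

/-- The trace of memory states (before each operation, and after the last). -/
def memTrace : Finset Data → List Op → Option (List (Finset Data))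
  | M, [] => some [M]
  | M, op :: ops => (op.exec M).bind fun M' => (memTrace M' ops).map fun tr => M :: tr

/-- Initial memory contents of the subchain from `s` to `t`. -/
def startMem (s t : ℕ) : Finset Data := {Data.a (s - 1), Data.delta t}

/-- Total size of the data in memory, the size of the subchain input
`a (s-1)` being by convention not counted. -/
def memSize (c : Chain) (s : ℕ) (M : Finset Data) : ℕ :=
  ∑ d ∈ M.erase (Data.a (s - 1)), d.size c

/-- Memory usage during an operation executed from memory `M`, producing
memory `M'`: for a forward operation, the data in memory during its execution
are its input and its output (i.e. `M ∪ M'`); a backward step is executed with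
all the data of `M` in memory (its output `delta (ℓ-1)` only materializes at
completion).  The overhead of the operation is added. -/
def opUsage (c : Chain) (s : ℕ) (M M' : Finset Data) : Op → ℕ
  | .Fall ℓ => memSize c s (M ∪ M') + c.of ℓ
  | .Fck ℓ => memSize c s (M ∪ M') + c.of ℓ
  | .Fnone ℓ => memSize c s (M ∪ M') + c.of ℓ
  | .B ℓ => memSize c s M + c.ob ℓ

/-- Peak memory usage of a sequence of operations run from memory `M`
(`none` if some operation cannot be executed). -/
def peakMem (c : Chain) (s : ℕ) : Finset Data → List Op → Option ℕ
  | _, [] => some 0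
  | M, op :: ops =>
      (op.exec M).bind fun M' =>
        (peakMem c s M' ops).map fun p => max (opUsage c s M M' op) p

/-- Total computation time of a schedule. -/
def schedTime (c : Chain) (S : List Op) : ℕ := (S.map (Op.duration c)).sum

/-- A valid schedule for the subchain from `s` to `t`: it only uses operations
of stages `s, …, t`, every operation's inputs are present in memory when it is
executed, and the schedule ends having produced `delta (s-1)`. -/
def Valid (s t : ℕ) (S : List Op) : Prop :=
  (∀ op ∈ S, s ≤ op.stage ∧ op.stage ≤ t) ∧
  ∃ Mf, execList (startMem s t) S = some Mf ∧ Data.delta (s - 1) ∈ Mf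

/-- The peak memory of the schedule `S` for the subchain from `s` to `t` is at
most `m`. -/
def PeakLE (c : Chain) (s t m : ℕ) (S : List Op) : Prop :=
  ∃ p, peakMem c s (startMem s t) S = some p ∧ p ≤ m

/-- Auxiliary predicate for memory persistence: `prev` is the memory state
before the previous operation (if any) and `M` the current memory state.
A stored value may only be removed by a backward operation using it; hence a
forward operation `Fnone ℓ` may only consume a value `a (ℓ-1)` that was
produced by the immediately preceding operation (a transient value, which was
never stored). -/
def persistAux : Option (Finset Data) → Finset Data → List Op → Prop
  | _, _, [] => True
  | prev, M, op :: ops =>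
      (∀ ℓ, op = Op.Fnone ℓ → ∃ P, prev = some P ∧ Data.a (ℓ - 1) ∉ P) ∧
      ∀ M', op.exec M = some M' → persistAux (some M) M' ops

/-- A schedule is memory persistent if every stored value is kept in memory
until it is used by a backward operation. -/
def Persistent (s t : ℕ) (S : List Op) : Prop :=
  persistAux none (startMem s t) S

/-- `m_∅(s,t)`: memory needed to execute all the forward steps from `s` to `t`
without saving any activation, while `delta t` is stored. -/
def mNone (c : Chain) (s t : ℕ) : ℕ :=
  max (c.wdelta t + c.wa s + c.of s)
    ((Finset.Icc (s + 1) (t - 1)).sup fun j =>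
      c.wdelta t + c.wa (j - 1) + c.wa j + c.of j)

/-- `m_all(s,t)`: memory needed to run `Fall s` (with `delta t` stored) and the
backward step `B s`. -/
def mAll (c : Chain) (s t : ℕ) : ℕ :=
  max (c.wdelta t + c.wbar s + c.of s) (c.wdelta s + c.wbar s + c.ob s)

/-- The dynamic programming recurrence `C_opt(s,t,m)` for the optimal
computation time of a memory-persistent schedule for the subchain from `s` to
`t` under memory bound `m`. -/
noncomputable def Copt (c : Chain) (s t m : ℕ) : ℕ∞ :=
  if h : t ≤ s then
    (if mAll c s s ≤ m then ((c.uf s + c.ub s : ℕ) : ℕ∞) else ⊤)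
  else
    min
      (if mNone c s t ≤ m then
        (Finset.Icc (s + 1) t).attach.inf fun s' =>
          ((∑ k ∈ Finset.Ico s s'.1, c.uf k : ℕ) : ℕ∞)
            + Copt c s'.1 t (m - c.wa (s'.1 - 1)) + Copt c s (s'.1 - 1) m
      else ⊤)
      (if mAll c s t ≤ m then
        ((c.uf s : ℕ) : ℕ∞) + Copt c (s + 1) t (m - c.wbar s) + ((c.ub s : ℕ) : ℕ∞)
      else ⊤)
termination_by t - s
decreasing_by
  · have hs' := s'.2
    simp only [Finset.mem_Icc] at hs'
    omega
  · have hs' := s'.2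
    simp only [Finset.mem_Icc] at hs'
    omega
  · omega

end Checkpoint

/-!
Induction on `t - s`, following the recurrence. `C_opt(s,s)` is realised by `[F_all^s, B^s]`.
For `C_2`, run `F_all^s`, then an optimal schedule for `(s+1, t)` in which its input `a^s` is
replaced by `ā^s` and `a^{s-1}` is carried along untouched, then `B^s`: every memory state of the
inner schedule grows by at most `w_ā^s`. For `C_1` with split point `s'`, run `F_ck^s` and then
`F_∅^{s+1}, …, F_∅^{s'-1}` (this is what `m_∅(s,t)` pays for), then an optimal schedule for
`(s', t)` with `a^{s-1}` carried along (its input `a^{s'-1}` is now counted, hence the budget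
`m - w_a^{s'-1}`); it ends in the initial memory `{a^{s-1}, δ^{s'-1}}` of the subchain
`(s, s'-1)`, for which an optimal schedule finishes the job. Both ways of embedding a schedule
are instances of one simulation argument: a map on memory states that commutes with the
operations and enlarges memory sizes by at most `k` preserves executability and persistence,
and raises the peak by at most `k`.
-/

namespace Checkpoint

variable {c : Chain} {s s' t m k : ℕ} {op : Op} {S S₁ S₂ : List Op} {M M₁ F : Finset Data}

def PeakWithin (c : Chain) (s m : ℕ) (M : Finset Data) (S : List Op) : Prop :=
  ∃ p, peakMem c s M S = some p ∧ p ≤ m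

theorem peakWithin_nil : PeakWithin c s m M [] :=
  ⟨0, rfl, Nat.zero_le m⟩

theorem peakWithin_cons :
    PeakWithin c s m M (op :: S) ↔
      ∃ M', op.exec M = some M' ∧ opUsage c s M M' op ≤ m ∧ PeakWithin c s m M' S := by
  simp only [PeakWithin, peakMem]
  cases op.exec M with
  | none => simp
  | some M' => simp [and_left_comm]

theorem PeakWithin.mono {m' : ℕ} (h : PeakWithin c s m M S) (hm : m ≤ m') :
    PeakWithin c s m' M S :=
  let ⟨p, hp, hpm⟩ := h
  ⟨p, hp, hpm.trans hm⟩

theorem execList_append (M : Finset Data) (S₁ S₂ : List Op) :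
    execList M (S₁ ++ S₂) = (execList M S₁).bind fun M₁ => execList M₁ S₂ := by
  induction S₁ generalizing M with
  | nil => rfl
  | cons op S₁ ih =>
    simp only [List.cons_append, execList]
    cases op.exec M <;> simp [ih]

theorem PeakWithin.append (hexec : execList M S₁ = some M₁) (h₁ : PeakWithin c s m M S₁)
    (h₂ : PeakWithin c s m M₁ S₂) : PeakWithin c s m M (S₁ ++ S₂) := by
  induction S₁ generalizing M with
  | nil => cases hexec; exact h₂
  | cons op S₁ ih =>
    obtain ⟨M', hM', husage, h₁⟩ := peakWithin_cons.1 h₁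
    simp only [execList, hM', Option.bind_some] at hexec
    exact peakWithin_cons.2 ⟨M', hM', husage, ih hexec h₁⟩

theorem persistAux_append {q : Option (Finset Data)} (hexec : execList M S₁ = some M₁)
    (h₁ : persistAux q M S₁) (h₂ : ∀ q', persistAux q' M₁ S₂) : persistAux q M (S₁ ++ S₂) := by
  induction S₁ generalizing q M with
  | nil => cases hexec; exact h₂ q
  | cons op S₁ ih =>
    refine ⟨h₁.1, fun M' hM' => ?_⟩
    simp only [execList, hM', Option.bind_some] at hexec
    exact ih hexec (h₁.2 M' hM')

structure Runs (c : Chain) (s m : ℕ) (S : List Op) (M F : Finset Data) : Prop where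
  execList_eq : execList M S = some F
  peakWithin : PeakWithin c s m M S
  -- whatever the previous state: the run does not start by consuming a transient value
  persist : ∀ q, persistAux q M S

theorem Runs.append (h₁ : Runs c s m S₁ M M₁) (h₂ : Runs c s m S₂ M₁ F) :
    Runs c s m (S₁ ++ S₂) M F where
  execList_eq := by rw [execList_append, h₁.execList_eq, Option.bind_some, h₂.execList_eq]
  peakWithin := h₁.peakWithin.append h₁.execList_eq h₂.peakWithin
  persist q := persistAux_append h₁.execList_eq (h₁.persist q) h₂.persist

theorem Runs.mono {m' : ℕ} (h : Runs c s m S M F) (hm : m ≤ m') : Runs c s m' S M F :=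
  ⟨h.execList_eq, h.peakWithin.mono hm, h.persist⟩

theorem runs_singleton (hexec : op.exec M = some F) (husage : opUsage c s M F op ≤ m)
    (hop : ∀ ℓ, op ≠ Op.Fnone ℓ) : Runs c s m [op] M F where
  execList_eq := by simp [execList, hexec]
  peakWithin := peakWithin_cons.2 ⟨F, hexec, husage, peakWithin_nil⟩
  persist _ := ⟨fun ℓ h => absurd h (hop ℓ), fun _ _ => trivial⟩

theorem memSize_insert_input (c : Chain) (s : ℕ) (M : Finset Data) :
    memSize c s (insert (Data.a (s - 1)) M) = memSize c s M := by
  rw [memSize, memSize, Finset.erase_insert_eq_erase]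

theorem memSize_insert (c : Chain) {x : Data} (hx : x ≠ Data.a (s - 1)) (hxM : x ∉ M) :
    memSize c s (insert x M) = x.size c + memSize c s M := by
  rw [memSize, memSize, Finset.erase_insert_of_ne hx, Finset.sum_insert (by simp [hxM])]

theorem memSize_insert_startMem (c : Chain) {x : Data} (hx : x ≠ Data.a (s - 1))
    (hxt : x ≠ Data.delta t) : memSize c s (insert x (startMem s t)) = x.size c + c.wdelta t := by
  rw [memSize_insert c hx (by simp [startMem, hx, hxt]), startMem, memSize_insert_input]
  simp [memSize, Data.size]

theorem memSize_le_memSize_add (c : Chain) (s s' : ℕ) (M : Finset Data) :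
    memSize c s M ≤ memSize c s' M + c.wa (s' - 1) :=
  calc memSize c s M ≤ ∑ d ∈ M, d.size c := Finset.sum_le_sum_of_subset (Finset.erase_subset _ _)
    _ ≤ memSize c s' M + c.wa (s' - 1) := by
      by_cases h : Data.a (s' - 1) ∈ M
      · rw [memSize, ← Finset.sum_erase_add M _ h]; rfl
      · rw [memSize, Finset.erase_eq_of_notMem h]; exact Nat.le_add_right _ _

def Op.CommutesWith (op : Op) (f : Finset Data → Finset Data) : Prop :=
  ∀ ⦃M M' : Finset Data⦄, op.exec M = some M' → op.exec (f M) = some (f M')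

section Map

variable {f : Finset Data → Finset Data}

theorem opUsage_map_le (hunion : ∀ X Y, f (X ∪ Y) = f X ∪ f Y)
    (hsize : ∀ X, memSize c s (f X) ≤ memSize c s' X + k) (M M' : Finset Data) (op : Op) :
    opUsage c s (f M) (f M') op ≤ opUsage c s' M M' op + k := by
  have := hsize M
  have := hsize (M ∪ M')
  cases op <;> simp only [opUsage, ← hunion] <;> omega

theorem execList_map (hS : ∀ op ∈ S, op.CommutesWith f) (h : execList M S = some F) :
    execList (f M) S = some (f F) := by
  induction S generalizing M with
  | nil => cases h; rfl
  | cons op S ih =>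
    simp only [execList, Option.bind_eq_some_iff] at h ⊢
    obtain ⟨M', hM', h⟩ := h
    exact ⟨f M', hS op (by simp) hM', ih (fun op' h' => hS op' (by simp [h'])) h⟩

theorem PeakWithin.map (hS : ∀ op ∈ S, op.CommutesWith f)
    (hunion : ∀ X Y, f (X ∪ Y) = f X ∪ f Y)
    (hsize : ∀ X, memSize c s (f X) ≤ memSize c s' X + k) (h : PeakWithin c s' m M S) :
    PeakWithin c s (m + k) (f M) S := by
  induction S generalizing M with
  | nil => exact peakWithin_nil
  | cons op S ih =>
    obtain ⟨M', hM', husage, h⟩ := peakWithin_cons.1 h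
    exact peakWithin_cons.2 ⟨f M', hS op (by simp) hM',
      (opUsage_map_le hunion hsize M M' op).trans (by omega),
      ih (fun op' h' => hS op' (by simp [h'])) h⟩

theorem persistAux_map {q q' : Option (Finset Data)} (hS : ∀ op ∈ S, op.CommutesWith f)
    (hexec : execList M S = some F)
    (hfn : ∀ ℓ, Op.Fnone ℓ ∈ S → ∀ P, Data.a (ℓ - 1) ∉ P → Data.a (ℓ - 1) ∉ f P)
    (h : persistAux q M S) (hq : ∀ P, q = some P → q' = some (f P)) :
    persistAux q' (f M) S := by
  induction S generalizing q q' M with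
  | nil => trivial
  | cons op S ih =>
    refine ⟨fun ℓ hℓ => ?_, fun M'' hM'' => ?_⟩
    · obtain ⟨P, hP, hnot⟩ := h.1 ℓ hℓ
      exact ⟨f P, hq P hP, hfn ℓ (by simp [← hℓ]) P hnot⟩
    · simp only [execList, Option.bind_eq_some_iff] at hexec
      obtain ⟨M', hM', hexec⟩ := hexec
      rw [hS op (by simp) hM', Option.some.injEq] at hM''
      subst hM''
      exact ih (fun op' h' => hS op' (by simp [h'])) hexec (fun ℓ h' => hfn ℓ (by simp [h']))
        (h.2 M' hM') (fun P hP => by rw [Option.some_injective _ hP])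

theorem Runs.map (hS : ∀ op ∈ S, op.CommutesWith f) (hunion : ∀ X Y, f (X ∪ Y) = f X ∪ f Y)
    (hsize : ∀ X, memSize c s (f X) ≤ memSize c s' X + k)
    (hfn : ∀ ℓ, Op.Fnone ℓ ∈ S → ∀ P, Data.a (ℓ - 1) ∉ P → Data.a (ℓ - 1) ∉ f P)
    (h : Runs c s' m S M F) : Runs c s (m + k) S (f M) (f F) where
  execList_eq := execList_map hS h.execList_eq
  peakWithin := h.peakWithin.map hS hunion hsize
  persist _ := persistAux_map hS h.execList_eq hfn (h.persist none) (by simp)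

end Map

-- Every operation of stage `> s` only touches data of index `≥ s`.
theorem Op.commutesWith_insert (hs : 1 ≤ s) (hop : s < op.stage) :
    op.CommutesWith (insert (Data.a (s - 1))) := by
  intro M M' h
  cases op <;> simp only [Op.stage] at hop <;> simp only [Op.exec] at h ⊢ <;>
    split_ifs at h ⊢ <;> simp only [Option.some.injEq] at h ⊢ <;> grind

theorem Runs.lift_insert (hs : 1 ≤ s) (hstage : ∀ op ∈ S, s < op.stage)
    (h : Runs c s' m S M F) :
    Runs c s (m + c.wa (s' - 1)) S (insert (Data.a (s - 1)) M) (insert (Data.a (s - 1)) F) :=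
  h.map (fun op hop => Op.commutesWith_insert hs (hstage op hop))
    (fun X Y => Finset.insert_union_distrib _ _ _)
    (fun X => (memSize_insert_input c s X).trans_le (memSize_le_memSize_add c s s' X))
    (fun ℓ hℓ P hP => by have := hstage _ hℓ; simp only [Op.stage] at this; simp [hP]; omega)

def replaceInput (s : ℕ) (M : Finset Data) : Finset Data :=
  insert (Data.abar s) (M.erase (Data.a s))

theorem memSize_replaceInput_le (c : Chain) (s : ℕ) (M : Finset Data) :
    memSize c s (replaceInput s M) ≤ c.wbar s + memSize c (s + 1) M :=
  calc memSize c s (replaceInput s M) ≤ ∑ d ∈ replaceInput s M, d.size c :=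
        Finset.sum_le_sum_of_subset (Finset.erase_subset _ _)
    _ ≤ c.wbar s + memSize c (s + 1) M := by
      by_cases h : Data.abar s ∈ M.erase (Data.a s)
      · rw [replaceInput, Finset.insert_eq_of_mem h]; exact Nat.le_add_left _ _
      · rw [replaceInput, Finset.sum_insert h]; rfl

-- `F_all^{s+1}`, `F_ck^{s+1}` and `B^{s+1}` accept `ā^s` in place of `a^s` (and `B^{s+1}` then
-- keeps it); `F_∅^{s+1}` is the only operation that needs `a^s` itself.
theorem Op.commutesWith_replaceInput (hop : s < op.stage) (hF : op ≠ Op.Fnone (s + 1)) :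
    op.CommutesWith (replaceInput s) := by
  intro M M' h
  cases op <;> simp only [Op.stage] at hop <;> simp only [Op.exec] at h ⊢ <;>
    split_ifs at h ⊢ <;> simp only [Option.some.injEq] at h ⊢ <;> subst h <;>
    unfold replaceInput at * <;> grind

theorem Runs.lift_replaceInput (hs : 1 ≤ s) (hstage : ∀ op ∈ S, s < op.stage)
    (hF : Op.Fnone (s + 1) ∉ S) (h : Runs c (s + 1) m S M F) :
    Runs c s (m + c.wbar s) S (insert (Data.a (s - 1)) (replaceInput s M))
      (insert (Data.a (s - 1)) (replaceInput s F)) :=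
  h.map (f := fun X => insert (Data.a (s - 1)) (replaceInput s X))
    (fun op hop _ _ hM => Op.commutesWith_insert hs (hstage op hop)
      (Op.commutesWith_replaceInput (hstage op hop) (by rintro rfl; exact hF hop) hM))
    (fun X Y => by ext; simp [replaceInput]; tauto)
    (fun X => by
      rw [memSize_insert_input, add_comm (memSize c (s + 1) X)]
      exact memSize_replaceInput_le c s X)
    (fun ℓ hℓ P hP => by
      have := hstage _ hℓ; simp only [Op.stage] at this; simp [replaceInput, hP]; omega)

theorem runs_Fall (hm : c.wdelta t + c.wbar s + c.of s ≤ m) :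
    Runs c s m [Op.Fall s] (startMem s t) (insert (Data.abar s) (startMem s t)) :=
  runs_singleton (by simp [Op.exec, startMem])
    (by
      rw [opUsage, Finset.union_insert, Finset.union_self,
        memSize_insert_startMem c (by simp) (by simp), Data.size]
      omega)
    (by simp)

theorem runs_B (hs : 1 ≤ s) (hm : c.wdelta s + c.wbar s + c.ob s ≤ m) :
    Runs c s m [Op.B s] (insert (Data.abar s) (startMem s s)) {Data.delta (s - 1)} := by
  refine runs_singleton ?_ ?_ (by simp)
  · simp only [Op.exec]
    rw [if_pos (by simp [startMem]), if_neg (by simp [startMem]; omega), Option.some.injEq]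
    ext x; simp [startMem]; grind
  · rw [opUsage, memSize_insert_startMem c (by simp) (by simp), Data.size]
    omega

theorem mNone_le_iff :
    mNone c s t ≤ m ↔ c.wdelta t + c.wa s + c.of s ≤ m ∧
      ∀ j, s < j → j < t → c.wdelta t + c.wa (j - 1) + c.wa j + c.of j ≤ m := by
  simp only [mNone, max_le_iff, Finset.sup_le_iff, Finset.mem_Icc]
  refine and_congr_right fun _ => forall_congr' fun j =>
    ⟨fun h h₁ h₂ => h ⟨h₁, by omega⟩, fun h hj => h hj.1 (by omega)⟩

theorem exec_Fnone_insert_startMem {j : ℕ} (hs : 1 ≤ s) (hj : s < j) :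
    (Op.Fnone j).exec (insert (Data.a (s - 1)) (startMem j t))
      = some (insert (Data.a (s - 1)) (startMem (j + 1) t)) := by
  simp only [Op.exec]
  rw [if_pos (by simp [startMem]), Option.some.injEq]
  ext x; simp [startMem]; grind

theorem opUsage_Fnone_insert_startMem (c : Chain) {j : ℕ} (hs : 1 ≤ s) (hj : s < j) :
    opUsage c s (insert (Data.a (s - 1)) (startMem j t))
        (insert (Data.a (s - 1)) (startMem (j + 1) t)) (Op.Fnone j)
      = c.wdelta t + c.wa (j - 1) + c.wa j + c.of j := by
  have hunion : (insert (Data.a (s - 1)) (startMem j t) ∪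
      insert (Data.a (s - 1)) (startMem (j + 1) t)).erase (Data.a (s - 1))
        = {Data.a (j - 1), Data.a j, Data.delta t} := by
    ext x; simp [startMem]; grind
  rw [opUsage, memSize, hunion, Finset.sum_insert (by simp; omega), Finset.sum_pair (by simp)]
  simp only [Data.size]
  omega

theorem map_Fnone_range'_spec (hs : 1 ≤ s) (n : ℕ) {j : ℕ} (hj : s < j)
    (hm : ∀ i, j ≤ i → i < j + n → c.wdelta t + c.wa (i - 1) + c.wa i + c.of i ≤ m) :
    let M := insert (Data.a (s - 1)) (startMem j t)
    let S := (List.range' j n).map Op.Fnone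
    execList M S = some (insert (Data.a (s - 1)) (startMem (j + n) t)) ∧
      PeakWithin c s m M S ∧ ∀ P, Data.a (j - 1) ∉ P → persistAux (some P) M S := by
  induction n generalizing j with
  | zero => exact ⟨rfl, peakWithin_nil, fun _ _ => trivial⟩
  | succ n ih =>
    obtain ⟨hexec, hpeak, hpersist⟩ :=
      ih (j := j + 1) (by omega) (fun i hi hin => hm i (by omega) (by omega))
    have hstep := exec_Fnone_insert_startMem (t := t) hs hj
    rw [show j + 1 + n = j + (n + 1) by omega] at hexec
    simp only [List.range'_succ, List.map_cons]
    refine ⟨by simp [execList, hstep, hexec], peakWithin_cons.2 ⟨_, hstep, ?_, hpeak⟩,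
      fun P hP => ⟨?_, fun M' hM' => ?_⟩⟩
    · rw [opUsage_Fnone_insert_startMem c hs hj]
      exact hm j le_rfl (by omega)
    · rintro ℓ ⟨⟩
      exact ⟨P, rfl, hP⟩
    · rw [hstep, Option.some.injEq] at hM'
      subst hM'
      exact hpersist _ (by simp [startMem]; omega)

def forwardOps (s s' : ℕ) : List Op :=
  Op.Fck s :: (List.range' (s + 1) (s' - (s + 1))).map Op.Fnone

theorem runs_forwardOps (hs : 1 ≤ s) (hs' : s < s') (hs't : s' ≤ t) (hm : mNone c s t ≤ m) :
    Runs c s m (forwardOps s s') (startMem s t) (insert (Data.a (s - 1)) (startMem s' t)) := by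
  obtain ⟨hm₀, hm⟩ := mNone_le_iff.1 hm
  have hFck : (Op.Fck s).exec (startMem s t)
      = some (insert (Data.a (s - 1)) (startMem (s + 1) t)) := by
    simp only [Op.exec]
    rw [if_pos (by simp [startMem]), Option.some.injEq]
    ext x; simp [startMem]; grind
  obtain ⟨hexec, hpeak, hpersist⟩ := map_Fnone_range'_spec (c := c) (t := t) (m := m) hs
    (s' - (s + 1)) (j := s + 1) (by omega) (fun i hi hin => hm i (by omega) (by omega))
  rw [show s + 1 + (s' - (s + 1)) = s' by omega] at hexec
  refine ⟨by simp [forwardOps, execList, hFck, hexec], peakWithin_cons.2 ⟨_, hFck, ?_, hpeak⟩,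
    fun q => ⟨by simp, fun M' hM' => ?_⟩⟩
  · have hunion : startMem s t ∪ insert (Data.a (s - 1)) (startMem (s + 1) t)
        = insert (Data.a s) (startMem s t) := by
      ext x; simp [startMem]
    rw [opUsage, hunion, memSize_insert_startMem c (by simp; omega) (by simp), Data.size]
    omega
  · rw [hFck, Option.some.injEq] at hM'
    subst hM'
    exact hpersist _ (by simp [startMem]; omega)

structure Admissible (c : Chain) (s t m : ℕ) (S : List Op) : Prop where
  stage_mem : ∀ op ∈ S, s ≤ op.stage ∧ op.stage ≤ t
  -- so that `S` still runs once its input `a^{s-1}` is replaced by `ā^{s-1}`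
  fnone_notMem : Op.Fnone s ∉ S
  runs : Runs c s m S (startMem s t) {Data.delta (s - 1)}

theorem Admissible.base (hs : 1 ≤ s) (hm : mAll c s s ≤ m) :
    Admissible c s s m [Op.Fall s, Op.B s] where
  stage_mem := by simp [Op.stage]
  fnone_notMem := by simp
  runs := (runs_Fall (le_of_max_le_left hm)).append (runs_B hs (le_of_max_le_right hm))

theorem Admissible.all (hs : 1 ≤ s) (hst : s < t) (hm : mAll c s t ≤ m)
    (hS : Admissible c (s + 1) t (m - c.wbar s) S) :
    Admissible c s t m (Op.Fall s :: S ++ [Op.B s]) where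
  stage_mem op hop := by
    simp only [List.cons_append, List.mem_cons, List.mem_append, List.mem_nil_iff,
      or_false] at hop
    rcases hop with rfl | hop | rfl
    · simp [Op.stage]; omega
    · have := hS.stage_mem op hop; omega
    · simp [Op.stage]; omega
  fnone_notMem hmem := by
    simp only [List.cons_append, List.mem_cons, List.mem_append, List.mem_nil_iff,
      reduceCtorEq, false_or, or_false] at hmem
    have := hS.stage_mem _ hmem
    simp only [Op.stage] at this
    omega
  runs := by
    obtain ⟨hmF, hmB⟩ := max_le_iff.1 hm
    have hlift := (hS.runs.lift_replaceInput hs (fun op hop => (hS.stage_mem op hop).1)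
      hS.fnone_notMem).mono (show m - c.wbar s + c.wbar s ≤ m by omega)
    have hstart : insert (Data.a (s - 1)) (replaceInput s (startMem (s + 1) t))
        = insert (Data.abar s) (startMem s t) := by
      ext x; simp [replaceInput, startMem]; grind
    have hend : insert (Data.a (s - 1)) (replaceInput s {Data.delta (s + 1 - 1)})
        = insert (Data.abar s) (startMem s s) := by
      ext x; simp [replaceInput, startMem]; grind
    rw [hstart, hend] at hlift
    exact ((runs_Fall hmF).append hlift).append (runs_B hs (by omega))

theorem Admissible.checkpoint {SR SL : List Op} (hs : 1 ≤ s) (hs' : s < s') (hs't : s' ≤ t)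
    (hm : mNone c s t ≤ m) (hR : Admissible c s' t (m - c.wa (s' - 1)) SR)
    (hL : Admissible c s (s' - 1) m SL) :
    Admissible c s t m (forwardOps s s' ++ SR ++ SL) where
  stage_mem op hop := by
    simp only [forwardOps, List.cons_append, List.mem_cons, List.mem_append, List.mem_map,
      List.mem_range'_1] at hop
    rcases hop with rfl | ⟨⟨j, hj, rfl⟩ | hop⟩ | hop
    · simp [Op.stage]; omega
    · simp [Op.stage]; omega
    · have := hR.stage_mem op hop; omega
    · have := hL.stage_mem op hop; omega
  fnone_notMem hmem := by
    simp only [forwardOps, List.cons_append, List.mem_cons, List.mem_append, List.mem_map,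
      List.mem_range'_1, reduceCtorEq, false_or, Op.Fnone.injEq] at hmem
    rcases hmem with (⟨j, hj, rfl⟩ | hmem) | hmem
    · omega
    · have := hR.stage_mem _ hmem; simp only [Op.stage] at this; omega
    · exact hL.fnone_notMem hmem
  runs := by
    have hwa : c.wa (s' - 1) ≤ m := by
      obtain ⟨hm₀, hm⟩ := mNone_le_iff.1 hm
      rcases (Nat.succ_le_of_lt hs').eq_or_lt with rfl | hlt
      · simp only [Nat.succ_sub_one]; omega
      · exact le_trans (by omega) (hm (s' - 1) (by omega) (by omega))
    have hlift := (hR.runs.lift_insert hs fun op hop => by have := hR.stage_mem op hop; omega).mono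
      (show m - c.wa (s' - 1) + c.wa (s' - 1) ≤ m by omega)
    exact ((runs_forwardOps hs hs' hs't hm).append hlift).append hL.runs

theorem schedTime_append (c : Chain) (S₁ S₂ : List Op) :
    schedTime c (S₁ ++ S₂) = schedTime c S₁ + schedTime c S₂ := by
  simp [schedTime]

theorem schedTime_forwardOps (c : Chain) (h : s < s') :
    schedTime c (forwardOps s s') = ∑ k ∈ Finset.Ico s s', c.uf k := by
  rw [Finset.sum_eq_sum_Ico_succ_bot h, Nat.Ico_eq_range']
  simp [schedTime, forwardOps, Op.duration, Function.comp_def]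
  rfl

noncomputable def splitCost (c : Chain) (s t m s' : ℕ) : ℕ∞ :=
  ((∑ k ∈ Finset.Ico s s', c.uf k : ℕ) : ℕ∞) + Copt c s' t (m - c.wa (s' - 1))
    + Copt c s (s' - 1) m

noncomputable def C₁ (c : Chain) (s t m : ℕ) : ℕ∞ :=
  if mNone c s t ≤ m then (Finset.Icc (s + 1) t).attach.inf fun s' => splitCost c s t m s'.1
  else ⊤

noncomputable def C₂ (c : Chain) (s t m : ℕ) : ℕ∞ :=
  if mAll c s t ≤ m then
    ((c.uf s : ℕ) : ℕ∞) + Copt c (s + 1) t (m - c.wbar s) + ((c.ub s : ℕ) : ℕ∞)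
  else ⊤

theorem Copt_of_le (h : t ≤ s) :
    Copt c s t m = if mAll c s s ≤ m then ((c.uf s + c.ub s : ℕ) : ℕ∞) else ⊤ := by
  rw [Copt, dif_pos h]

theorem Copt_eq_min (h : s < t) : Copt c s t m = min (C₁ c s t m) (C₂ c s t m) := by
  rw [Copt, dif_neg (not_le.2 h)]
  rfl

theorem exists_C₁_eq_of_lt_top (h : s < t) (hfin : C₁ c s t m < ⊤) :
    ∃ s', s < s' ∧ s' ≤ t ∧ mNone c s t ≤ m ∧ C₁ c s t m = splitCost c s t m s' := by
  unfold C₁ at hfin ⊢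
  split_ifs at hfin ⊢ with hm
  · obtain ⟨⟨s', hs'⟩, -, hinf⟩ := Finset.exists_mem_eq_inf _
      (Finset.attach_nonempty_iff.2 (Finset.nonempty_Icc.2 (Nat.succ_le_of_lt h)))
      (fun s' => splitCost c s t m s'.1)
    rw [Finset.mem_Icc] at hs'
    exact ⟨s', hs'.1, hs'.2, hm, hinf⟩
  · exact absurd hfin (lt_irrefl ⊤)

theorem C₂_eq_of_lt_top (hfin : C₂ c s t m < ⊤) :
    mAll c s t ≤ m ∧ C₂ c s t m = c.uf s + Copt c (s + 1) t (m - c.wbar s) + c.ub s := by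
  unfold C₂ at hfin ⊢
  split_ifs at hfin ⊢ with hm
  · exact ⟨hm, rfl⟩
  · exact absurd hfin (lt_irrefl ⊤)

theorem exists_admissible_of_Copt_lt_top {s t m : ℕ} (hs : 1 ≤ s) (hst : s ≤ t)
    (hfin : Copt c s t m < ⊤) :
    ∃ S, Admissible c s t m S ∧ (schedTime c S : ℕ∞) = Copt c s t m := by
  rcases hst.eq_or_lt with rfl | hlt
  · rw [Copt_of_le le_rfl] at hfin ⊢
    split_ifs at hfin ⊢ with hm
    · exact ⟨_, Admissible.base hs hm, by simp [schedTime, Op.duration]⟩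
    · exact absurd hfin (lt_irrefl ⊤)
  rw [Copt_eq_min hlt] at hfin ⊢
  rcases min_choice (C₁ c s t m) (C₂ c s t m) with hmin | hmin <;> rw [hmin] at hfin ⊢
  · obtain ⟨s', hs', hs't, hm, hC⟩ := exists_C₁_eq_of_lt_top hlt hfin
    rw [hC, splitCost] at hfin ⊢
    obtain ⟨⟨-, hR⟩, hL⟩ := ENat.add_lt_top.1 hfin |>.imp_left ENat.add_lt_top.1
    obtain ⟨SR, hSR, hTR⟩ := exists_admissible_of_Copt_lt_top (by omega) hs't hR
    obtain ⟨SL, hSL, hTL⟩ := exists_admissible_of_Copt_lt_top hs (by omega) hL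
    refine ⟨_, hSR.checkpoint hs hs' hs't hm hSL, ?_⟩
    rw [← hTR, ← hTL, schedTime_append, schedTime_append, schedTime_forwardOps c hs']
    push_cast
    rfl
  · obtain ⟨hm, hC⟩ := C₂_eq_of_lt_top hfin
    rw [hC] at hfin ⊢
    obtain ⟨SB, hSB, hTB⟩ := exists_admissible_of_Copt_lt_top (by omega) hlt
      (ENat.add_lt_top.1 (ENat.add_lt_top.1 hfin).1).2
    refine ⟨_, hSB.all hs hlt hm, ?_⟩
    rw [← hTB]
    simp [schedTime, Op.duration, add_assoc]
termination_by t - s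

theorem exists_schedule_of_Copt_lt_top_general (c : Chain) (s t m : ℕ)
    (h1 : 1 ≤ s) (h2 : s ≤ t)
    (hfin : Copt c s t m < ⊤) :
    ∃ S : List Op, Valid s t S ∧ Persistent s t S ∧ PeakLE c s t m S ∧
      (schedTime c S : ℕ∞) = Copt c s t m := by
  obtain ⟨S, hS, htime⟩ := exists_admissible_of_Copt_lt_top h1 h2 hfin
  exact ⟨S, ⟨hS.stage_mem, _, hS.runs.execList_eq, Finset.mem_singleton_self _⟩,
    hS.runs.persist none, hS.runs.peakWithin, htime⟩

/-- For all `1 ≤ s ≤ t ≤ L+1` and every memory bound `m` such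
that `C_opt(s,t,m) < ∞`, there exists a valid memory-persistent schedule for
the subchain from `s` to `t` whose peak memory is at most `m` and whose
computation time equals `C_opt(s,t,m)`. -/
theorem exists_schedule_of_Copt_lt_top (c : Chain) (s t m : ℕ)
    (h1 : 1 ≤ s) (h2 : s ≤ t) (h3 : t ≤ c.L + 1)
    (hfin : Copt c s t m < ⊤) :
    ∃ S : List Op, Valid s t S ∧ Persistent s t S ∧ PeakLE c s t m S ∧
      (schedTime c S : ℕ∞) = Copt c s t m :=
  exists_schedule_of_Copt_lt_top_general c s t m h1 h2 hfin

end Checkpoint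
end

section
/- In any valid schedule for the subchain from s to t, for every stage j with s ≤ j ≤ t at least one forward operation at stage j (F_all^j, F_ck^j or F_ø^j) is executed strictly before the (first) execution of B^t; moreover δ^t is present in memory during every operation executed before B^t. -/
/-!
`B t` consumes `abar t`, which only a forward step at stage `t` can create; a forward step at
stage `j` in turn needs `a (j-1)` or `abar (j-1)`, which for `j > s` is not in the initial
memory `{a (s-1), delta t}` and so was created by an earlier forward step at stage `j-1`.
Descending from `t` to `s` gives the forward steps, and `delta t` survives until `B t`
because no other operation removes it.
-/

namespace Checkpoint

def HasStageOutput (M : Finset Data) (j : ℕ) : Prop :=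
  Data.a j ∈ M ∨ Data.abar j ∈ M

def Op.IsForwardAt (op : Op) (j : ℕ) : Prop :=
  op = .Fall j ∨ op = .Fck j ∨ op = .Fnone j

lemma hasStageOutput_startMem_iff {s t j : ℕ} :
    HasStageOutput (startMem s t) j ↔ j = s - 1 := by
  simp [HasStageOutput, startMem, eq_comm]

section Exec

variable {op : Op} {M M' : Finset Data}

lemma Op.hasStageOutput_or_isForwardAt_of_exec {j : ℕ} (hex : op.exec M = some M')
    (hout : HasStageOutput M' j) : HasStageOutput M j ∨ op.IsForwardAt j := by
  unfold HasStageOutput at *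
  cases op <;> simp only [Op.exec] at hex <;> split_ifs at hex <;> cases hex <;>
    simp only [Finset.mem_insert, Finset.mem_erase] at hout <;>
    simp only [Op.IsForwardAt, Op.Fall.injEq, Op.Fck.injEq, Op.Fnone.injEq] <;>
    grind

lemma Op.IsForwardAt.hasStageOutput_pred {j : ℕ} (hop : op.IsForwardAt j)
    (hex : op.exec M = some M') : HasStageOutput M (j - 1) := by
  rcases hop with rfl | rfl | rfl <;> simp only [Op.exec] at hex <;> split_ifs at hex with h <;>
    first | exact h | exact Or.inl h

lemma Op.abar_mem_of_exec_B {ℓ : ℕ} (hex : (Op.B ℓ).exec M = some M') : Data.abar ℓ ∈ M := by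
  simp only [Op.exec] at hex
  split_ifs at hex with h <;> exact h.2.1

lemma Op.delta_mem_of_exec_of_ne {ℓ : ℕ} (hex : op.exec M = some M') (hop : op ≠ .B ℓ)
    (hmem : Data.delta ℓ ∈ M) : Data.delta ℓ ∈ M' := by
  cases op <;> simp only [Op.exec] at hex <;> split_ifs at hex <;> cases hex <;>
    simp_all [Finset.mem_insert, Finset.mem_erase] <;> grind

end Exec

section Trace

variable {M : Finset Data} {S : List Op} {tr : List (Finset Data)}

lemma length_of_memTrace_eq_some (htr : memTrace M S = some tr) : tr.length = S.length + 1 := by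
  induction S generalizing M tr with
  | nil =>
    simp only [memTrace, Option.some.injEq] at htr
    subst htr
    rfl
  | cons op ops ih =>
    simp only [memTrace, Option.bind_eq_some_iff, Option.map_eq_some_iff] at htr
    obtain ⟨M', -, tr', htr', rfl⟩ := htr
    simp [ih htr']

lemma getElem_zero_of_memTrace_eq_some (htr : memTrace M S = some tr) :
    tr[0]'(by simp [length_of_memTrace_eq_some htr]) = M := by
  cases S with
  | nil =>
    simp only [memTrace, Option.some.injEq] at htr
    subst htr
    rfl
  | cons op ops =>
    simp only [memTrace, Option.bind_eq_some_iff, Option.map_eq_some_iff] at htr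
    obtain ⟨M', -, tr', -, rfl⟩ := htr
    rfl

lemma exec_getElem_of_memTrace_eq_some (htr : memTrace M S = some tr) {k : ℕ}
    (hk : k < S.length) :
    S[k].exec (tr[k]'(by simp [length_of_memTrace_eq_some htr]; omega)) =
      some (tr[k + 1]'(by simp [length_of_memTrace_eq_some htr]; omega)) := by
  induction S generalizing M tr k with
  | nil => simp at hk
  | cons op ops ih =>
    simp only [memTrace, Option.bind_eq_some_iff, Option.map_eq_some_iff] at htr
    obtain ⟨M', hM', tr', htr', rfl⟩ := htr
    cases k with
    | zero => simpa [getElem_zero_of_memTrace_eq_some htr'] using hM'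
    | succ k => simpa using ih htr' (Nat.lt_of_succ_lt_succ hk)


lemma hasStageOutput_or_exists_forwardAt (htr : memTrace M S = some tr) {j : ℕ} :
    ∀ k (hk : k < tr.length), HasStageOutput tr[k] j →
      HasStageOutput M j ∨ ∃ i, ∃ hi : i < S.length, i < k ∧ S[i].IsForwardAt j
  | 0, _, hout => .inl (getElem_zero_of_memTrace_eq_some htr ▸ hout)
  | k + 1, hk, hout => by
    have hkS : k < S.length := by simp [length_of_memTrace_eq_some htr] at hk; omega
    rcases Op.hasStageOutput_or_isForwardAt_of_exec (exec_getElem_of_memTrace_eq_some htr hkS)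
      hout with hprev | hfwd
    · rcases hasStageOutput_or_exists_forwardAt htr k (by omega) hprev with hM | ⟨i, hi, hik, hfwd⟩
      · exact .inl hM
      · exact .inr ⟨i, hi, by omega, hfwd⟩
    · exact .inr ⟨k, hkS, by omega, hfwd⟩

lemma exists_forwardAt_of_hasStageOutput (htr : memTrace M S = some tr) {s : ℕ}
    (hM : ∀ j, s ≤ j → ¬HasStageOutput M j) :
    ∀ j₀ k (hk : k < tr.length), HasStageOutput tr[k] j₀ →
      ∀ j, s ≤ j → j ≤ j₀ → ∃ i, ∃ hi : i < S.length, i < k ∧ S[i].IsForwardAt j := by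
  intro j₀
  induction j₀ with
  | zero =>
    intro k hk hout j hsj hj
    obtain rfl : j = 0 := by omega
    exact (hasStageOutput_or_exists_forwardAt htr k hk hout).resolve_left (hM 0 hsj)
  | succ j₀ ih =>
    intro k hk hout j hsj hj
    obtain ⟨i, hi, hik, hfwd⟩ :=
      (hasStageOutput_or_exists_forwardAt htr k hk hout).resolve_left (hM _ (by omega))
    rcases Nat.lt_or_eq_of_le hj with hj | rfl
    · have hin := hfwd.hasStageOutput_pred (exec_getElem_of_memTrace_eq_some htr hi)
      obtain ⟨i', hi', hi'i, hfwd'⟩ := ih i _ hin j hsj (by omega)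
      exact ⟨i', hi', by omega, hfwd'⟩
    · exact ⟨i, hi, hik, hfwd⟩

lemma delta_mem_getElem_memTrace (htr : memTrace M S = some tr) {ℓ : ℕ}
    (hM : Data.delta ℓ ∈ M) :
    ∀ k (hk : k < tr.length), (∀ i (hi : i < S.length), i < k → S[i] ≠ .B ℓ) →
      Data.delta ℓ ∈ tr[k]
  | 0, _, _ => getElem_zero_of_memTrace_eq_some htr ▸ hM
  | k + 1, hk, hno => by
    have hkS : k < S.length := by simp [length_of_memTrace_eq_some htr] at hk; omega
    refine Op.delta_mem_of_exec_of_ne (exec_getElem_of_memTrace_eq_some htr hkS)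
      (hno k hkS (by omega)) ?_
    exact delta_mem_getElem_memTrace htr hM k (by omega) fun i hi hik => hno i hi (by omega)

end Trace

theorem forward_before_first_backward_general (s t : ℕ) (h1 : 1 ≤ s)
    (S : List Op)
    (tr : List (Finset Data)) (htr : memTrace (startMem s t) S = some tr)
    (i : ℕ) (hi : i < S.length) (hB : S.get ⟨i, hi⟩ = Op.B t)
    (hfirst : ∀ i' (h' : i' < S.length), i' < i → S.get ⟨i', h'⟩ ≠ Op.B t) :
    (∀ j, s ≤ j → j ≤ t → ∃ i', ∃ h' : i' < S.length, i' < i ∧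
        (S.get ⟨i', h'⟩ = Op.Fall j ∨ S.get ⟨i', h'⟩ = Op.Fck j ∨
          S.get ⟨i', h'⟩ = Op.Fnone j))
    ∧ (∀ i', ∀ h' : i' < tr.length, i' ≤ i → Data.delta t ∈ tr.get ⟨i', h'⟩) := by
  simp only [List.get_eq_getElem] at hB hfirst ⊢
  have hiT : i < tr.length := by simp [length_of_memTrace_eq_some htr]; omega
  have hstart : ∀ j, s ≤ j → ¬HasStageOutput (startMem s t) j := fun j hj h => by
    rw [hasStageOutput_startMem_iff] at h; omega
  have habar : HasStageOutput tr[i] t :=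
    .inr (Op.abar_mem_of_exec_B (hB ▸ exec_getElem_of_memTrace_eq_some htr hi))
  refine ⟨exists_forwardAt_of_hasStageOutput htr hstart t i hiT habar, fun k hk hki => ?_⟩
  exact delta_mem_getElem_memTrace htr (by simp [startMem]) k hk
    fun i' hi' hi'k => hfirst i' hi' (by omega)

/-- In any valid schedule for the subchain from `s` to `t`,
for every stage `j` with `s ≤ j ≤ t` at least one forward operation at stage
`j` (`F_all j`, `F_ck j` or `F_ø j`) is executed strictly before the first
execution of `B t`; moreover `delta t` is present in memory during every
operation executed before `B t`. -/
theorem forward_before_first_backward (s t : ℕ) (h1 : 1 ≤ s) (h2 : s ≤ t)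
    (S : List Op) (hS : Valid s t S)
    (tr : List (Finset Data)) (htr : memTrace (startMem s t) S = some tr)
    (i : ℕ) (hi : i < S.length) (hB : S.get ⟨i, hi⟩ = Op.B t)
    (hfirst : ∀ i' (h' : i' < S.length), i' < i → S.get ⟨i', h'⟩ ≠ Op.B t) :
    (∀ j, s ≤ j → j ≤ t → ∃ i', ∃ h' : i' < S.length, i' < i ∧
        (S.get ⟨i', h'⟩ = Op.Fall j ∨ S.get ⟨i', h'⟩ = Op.Fck j ∨
          S.get ⟨i', h'⟩ = Op.Fnone j))
    ∧ (∀ i', ∀ h' : i' < tr.length, i' ≤ i → Data.delta t ∈ tr.get ⟨i', h'⟩) :=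
  forward_before_first_backward_general s t h1 S tr htr i hi hB hfirst

end Checkpoint
end

section
/- Assume that w_ā^ℓ ≥ w_a^ℓ for every stage ℓ. Then every valid schedule for the subchain from s to t (with s < t) has peak memory at least m_∅(s,t) = max( w_δ^t + w_a^s + o_f^s , max_{s+1 ≤ j ≤ t−1} (w_δ^t + w_a^{j−1} + w_a^j + o_f^j) ); that is, a memory of at least m_∅(s,t) is needed just to execute all forward steps from s to t without saving any activation while δ^t is stored. -/
/-!
Until the first backward step, the only gradient in memory is `δ t`: a backward step `B ℓ`
needs `δ ℓ` and `ā ℓ`, hence `ℓ = t` and `ā t`, which exists only once all forward steps up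
to `t` have been run. Forward steps can only advance one stage at a time, so for every
`s ≤ j < t` some forward operation at stage `j` runs while `δ t` is stored. During it,
memory holds `δ t`, its output (of size at least `w_a^j`, as `w_ā ≥ w_a`) and its input
(of size at least `w_a^{j-1}`, not counted when `j = s`).
-/

namespace Checkpoint

lemma sum_size_le_memSize {c : Chain} {s : ℕ} {T A : Finset Data} (hTA : T ⊆ A)
    (hT : Data.a (s - 1) ∉ T) : ∑ d ∈ T, d.size c ≤ memSize c s A :=
  Finset.sum_le_sum_of_subset (Finset.subset_erase.2 ⟨hTA, hT⟩)

/-- `mNone c s t` is the maximum of these over `s ≤ k < t`; the input of the step at stage `s`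
is the subchain input, whose size is not counted. -/
def mNoneTerm (c : Chain) (s t k : ℕ) : ℕ :=
  c.wdelta t + (if k = s then 0 else c.wa (k - 1)) + c.wa k + c.of k

lemma mNone_le {c : Chain} {s t p : ℕ} (hst : s < t)
    (h : ∀ k, s ≤ k → k < t → mNoneTerm c s t k ≤ p) : mNone c s t ≤ p := by
  refine max_le ?_ (Finset.sup_le fun k hk => ?_)
  · simpa [mNoneTerm] using h s le_rfl hst
  · rw [Finset.mem_Icc] at hk
    have := h k (by omega) (by omega)
    simp only [mNoneTerm, if_neg (show k ≠ s by omega)] at this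
    omega

lemma mNoneTerm_le_memSize {c : Chain} (hw : ∀ ℓ, c.wa ℓ ≤ c.wbar ℓ) {s t ℓ : ℕ}
    (hs : 1 ≤ s) (hsℓ : s ≤ ℓ) {A : Finset Data} (hδ : Data.delta t ∈ A)
    (hin : Data.a (ℓ - 1) ∈ A ∨ Data.abar (ℓ - 1) ∈ A)
    (hout : Data.a ℓ ∈ A ∨ Data.abar ℓ ∈ A) :
    mNoneTerm c s t ℓ ≤ memSize c s A + c.of ℓ := by
  have hwℓ := hw ℓ
  have hwℓ₁ := hw (ℓ - 1)
  by_cases hℓs : ℓ = s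
  · rcases hout with hout | hout
    all_goals
      have := sum_size_le_memSize (c := c) (s := s)
        (Finset.insert_subset hδ (Finset.singleton_subset_iff.2 hout)) (by simp <;> omega)
      rw [Finset.sum_pair (by simp)] at this
      simp only [mNoneTerm, if_pos hℓs, Data.size] at this ⊢
      omega
  · rcases hin with hin | hin <;> rcases hout with hout | hout
    all_goals
      have := sum_size_le_memSize (c := c) (s := s)
        (Finset.insert_subset hδ (Finset.insert_subset hin (Finset.singleton_subset_iff.2 hout)))
        (by simp <;> omega)
      rw [Finset.sum_insert (by simp), Finset.sum_pair (by simp <;> omega)] at this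
      simp only [mNoneTerm, if_neg hℓs, Data.size] at this ⊢
      omega

lemma Op.exec_eq_some {op : Op} {M M' : Finset Data} (h : op.exec M = some M') :
    (∃ ℓ, op = .B ℓ ∧ Data.delta ℓ ∈ M ∧ Data.abar ℓ ∈ M) ∨
    ((Data.a (op.stage - 1) ∈ M ∨ Data.abar (op.stage - 1) ∈ M) ∧
      ∃ out, (out = .a op.stage ∨ out = .abar op.stage) ∧ out ∈ M' ∧
        M' ⊆ insert out M ∧ M.erase (.a (op.stage - 1)) ⊆ M' ∧
        ∀ c s, opUsage c s M M' op = memSize c s (M ∪ M') + c.of op.stage) := by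
  cases op <;> simp only [Op.exec] at h <;> split_ifs at h with hc <;> cases h
  · exact .inr ⟨hc, _, .inr rfl, Finset.mem_insert_self _ _, subset_rfl,
      (Finset.erase_subset _ _).trans (Finset.subset_insert _ _), fun _ _ => rfl⟩
  · exact .inr ⟨hc, _, .inl rfl, Finset.mem_insert_self _ _, subset_rfl,
      (Finset.erase_subset _ _).trans (Finset.subset_insert _ _), fun _ _ => rfl⟩
  · exact .inr ⟨.inl hc, _, .inl rfl, Finset.mem_insert_self _ _,
      Finset.insert_subset_insert _ (Finset.erase_subset _ _), Finset.subset_insert _ _,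
      fun _ _ => rfl⟩
  · exact .inl ⟨_, rfl, hc.1, hc.2.1⟩
  · exact .inl ⟨_, rfl, hc.1, hc.2.1⟩

def ForwardPhase (t j : ℕ) (M : Finset Data) : Prop :=
  Data.delta t ∈ M ∧ (∀ ℓ, Data.delta ℓ ∈ M → ℓ = t) ∧
    ∀ k, j ≤ k → k ≤ t → Data.a k ∉ M ∧ Data.abar k ∉ M

lemma forwardPhase_startMem {s t : ℕ} (hs : 1 ≤ s) : ForwardPhase t s (startMem s t) := by
  refine ⟨by simp [startMem], ?_, ?_⟩ <;> simp [startMem]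
  omega

namespace ForwardPhase

variable {t j : ℕ} {M : Finset Data}

lemma not_backward (hM : ForwardPhase t j M) (hjt : j ≤ t) {ℓ : ℕ}
    (hδ : Data.delta ℓ ∈ M) (hb : Data.abar ℓ ∈ M) : False := by
  obtain rfl := hM.2.1 ℓ hδ
  exact (hM.2.2 ℓ hjt le_rfl).2 hb

lemma stage_le (hM : ForwardPhase t j M) {ℓ : ℕ} (hℓt : ℓ ≤ t)
    (hin : Data.a (ℓ - 1) ∈ M ∨ Data.abar (ℓ - 1) ∈ M) : ℓ ≤ j := by
  refine not_lt.1 fun hjℓ => ?_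
  have := hM.2.2 (ℓ - 1) (Nat.le_sub_one_of_lt hjℓ) (by omega)
  tauto

lemma of_subset_insert (hM : ForwardPhase t j M) {j' ℓ : ℕ} {out : Data} {M' : Finset Data}
    (hjj' : j ≤ j') (hℓ : ℓ < j') (hout : out = .a ℓ ∨ out = .abar ℓ)
    (hsub : M' ⊆ insert out M) (hδ : Data.delta t ∈ M') : ForwardPhase t j' M' := by
  refine ⟨hδ, fun k hk => ?_, fun k hk hkt => ⟨fun ha => ?_, fun hb => ?_⟩⟩
  · rcases Finset.mem_insert.1 (hsub hk) with h | h
    · rcases hout with rfl | rfl <;> simp at h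
    · exact hM.2.1 k h
  · rcases Finset.mem_insert.1 (hsub ha) with h | h
    · rcases hout with rfl | rfl <;> simp at h; omega
    · exact (hM.2.2 k (by omega) hkt).1 h
  · rcases Finset.mem_insert.1 (hsub hb) with h | h
    · rcases hout with rfl | rfl <;> simp at h; omega
    · exact (hM.2.2 k (by omega) hkt).2 h

end ForwardPhase

lemma peakMem_cons_eq_some {c : Chain} {s p : ℕ} {M : Finset Data} {op : Op} {ops : List Op}
    (h : peakMem c s M (op :: ops) = some p) :
    ∃ M' p', op.exec M = some M' ∧ peakMem c s M' ops = some p' ∧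
      p = max (opUsage c s M M' op) p' := by
  cases hE : op.exec M with
  | none => simp [peakMem, hE] at h
  | some M' =>
    simp only [peakMem, hE, Option.bind_some, Option.map_eq_some_iff] at h
    obtain ⟨p', hp', rfl⟩ := h
    exact ⟨M', p', rfl, hp', rfl⟩

theorem mNoneTerm_le_of_forwardPhase {c : Chain} (hw : ∀ ℓ, c.wa ℓ ≤ c.wbar ℓ) {s t : ℕ}
    (hs : 1 ≤ s) {S : List Op} (hS : ∀ op ∈ S, s ≤ op.stage ∧ op.stage ≤ t)
    {M : Finset Data} {j p : ℕ} (hsj : s ≤ j) (hjt : j ≤ t) (hM : ForwardPhase t j M)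
    (hp : peakMem c s M S = some p)
    (hend : ∃ Mf, execList M S = some Mf ∧ Data.delta (s - 1) ∈ Mf) :
    ∀ k, j ≤ k → k < t → mNoneTerm c s t k ≤ p := by
  induction S generalizing M j p with
  | nil =>
    obtain ⟨Mf, hMf, hδ⟩ := hend
    cases hMf
    have := hM.2.1 _ hδ
    omega
  | cons op ops ih =>
    obtain ⟨M', p', hE, hp', rfl⟩ := peakMem_cons_eq_some hp
    rw [execList, hE, Option.bind_some] at hend
    rcases Op.exec_eq_some hE with
      ⟨ℓ, rfl, hδ, hb⟩ | ⟨hin, out, hout, houtM', hsub, herase, husage⟩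
    · exact (hM.not_backward hjt hδ hb).elim
    obtain ⟨hsℓ, hℓt⟩ := hS op List.mem_cons_self
    have hδ' : Data.delta t ∈ M' := herase (Finset.mem_erase.2 ⟨by simp, hM.1⟩)
    have ih' : ∀ j', j ≤ j' → op.stage < j' → j' ≤ t →
        ∀ k, j' ≤ k → k < t → mNoneTerm c s t k ≤ p' := fun j' hjj' hℓ hj't =>
      ih (fun o ho => hS o (List.mem_cons_of_mem _ ho)) (hsj.trans hjj') hj't
        (hM.of_subset_insert hjj' hℓ hout hsub hδ') hp' hend
    intro k hjk hkt
    rcases (hM.stage_le hℓt hin).lt_or_eq with hlt | heq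
    · exact (ih' j le_rfl hlt hjt k hjk hkt).trans (le_max_right _ _)
    rcases hjk.eq_or_lt with rfl | hlt
    · refine le_max_of_le_left ?_
      rw [husage, ← heq]
      refine mNoneTerm_le_memSize hw hs hsℓ (Finset.mem_union_left _ hM.1)
        (hin.imp (Finset.mem_union_left _) (Finset.mem_union_left _)) ?_
      rcases hout with rfl | rfl
      exacts [.inl (Finset.mem_union_right _ houtM'), .inr (Finset.mem_union_right _ houtM')]
    · exact (ih' (j + 1) (by omega) (by omega) (by omega) k hlt hkt).trans (le_max_right _ _)

theorem peak_ge_mNone_general (c : Chain) (s t : ℕ)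
    (h1 : 1 ≤ s) (h2 : s < t)
    (hw : ∀ ℓ, c.wa ℓ ≤ c.wbar ℓ)
    (S : List Op) (hS : Valid s t S)
    (p : ℕ) (hp : peakMem c s (startMem s t) S = some p) :
    mNone c s t ≤ p :=
  mNone_le h2 fun k hsk hkt =>
    mNoneTerm_le_of_forwardPhase hw h1 hS.1 le_rfl h2.le (forwardPhase_startMem h1) hp hS.2
      k hsk hkt

/-- Assume that `wā ℓ ≥ wa ℓ` for every stage `ℓ`.  Then
every valid schedule for the subchain from `s` to `t` (with `s < t`) has peak
memory at least
`m_∅(s,t) = max (wδ t + wa s + of s)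
  (max_{s+1 ≤ j ≤ t-1} (wδ t + wa (j-1) + wa j + of j))`:
a memory of at least `m_∅(s,t)` is needed just to execute all the forward
steps from `s` to `t` without saving any activation while `delta t` is
stored. -/
theorem peak_ge_mNone (c : Chain) (s t : ℕ)
    (h1 : 1 ≤ s) (h2 : s < t) (h3 : t ≤ c.L + 1)
    (hw : ∀ ℓ, c.wa ℓ ≤ c.wbar ℓ)
    (S : List Op) (hS : Valid s t S)
    (p : ℕ) (hp : peakMem c s (startMem s t) S = some p) :
    mNone c s t ≤ p :=
  peak_ge_mNone_general c s t h1 h2 hw S hS p hp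

end Checkpoint
end
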